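/- arXiv:1201.4677 — 5 statements merged into one kernel-verified Lean document; each statement's English description precedes it below -/
import Mathlib

section
/- Let W be a wedge in ℝ^m, L = W ∩ (−W), and K = L^⊥ ∩ W. For every x ∈ ℝ^m, writing x = x_k + x_l with x_k ∈ L^⊥ and x_l ∈ L (the orthogonal decomposition of x), the metric projection of x onto W satisfies P_W x = P_K x_k + x_l, where P_K denotes the metric projection onto K. -/
/-!
The wedge `W` is invariant under translation by its lineality space `L`, so for `y ∈ W` with
orthogonal decomposition `y = yk + yl` (`yk ∈ Lᗮ`, `yl ∈ L`) also `yk ∈ W`, i.e. `yk ∈ K`.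
Pythagoras then gives `‖x - y‖² = ‖xk - yk‖² + ‖xl - yl‖² ≥ ‖xk - P_K xk‖² = ‖x - (P_K xk + xl)‖²`,
so `P_K xk + xl ∈ W` is a nearest point to `x`; nearest points in a convex subset of a strictly
convex space are unique.
-/

open scoped RealInnerProductSpace Pointwise

theorem Convex.eq_of_isMinOn_norm_sub {E : Type*} [NormedAddCommGroup E] [NormedSpace ℝ E]
    [StrictConvexSpace ℝ E] {s : Set E} (hs : Convex ℝ s) {x a b : E} (ha : a ∈ s) (hb : b ∈ s)
    (ha_min : IsMinOn (‖x - ·‖) s a) (hb_min : IsMinOn (‖x - ·‖) s b) : a = b := by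
  have hdist : ‖x - a‖ = ‖x - b‖ := (ha_min hb).antisymm (hb_min ha)
  have hmid : x - midpoint ℝ a b = (1 / 2 : ℝ) • ((x - a) + (x - b)) := by
    rw [midpoint_eq_smul_add, invOf_eq_inv]; module
  by_contra hne
  have hlt := (norm_midpoint_lt_iff hdist).2 (sub_right_injective.ne hne)
  rw [← hmid] at hlt
  exact (ha_min (hs.midpoint_mem ha hb)).not_gt hlt

def PointedCone.ofSet {E : Type*} [AddCommGroup E] [Module ℝ E] (W : Set E) (hne : W.Nonempty)
    (hadd : ∀ x ∈ W, ∀ y ∈ W, x + y ∈ W) (hsmul : ∀ t : ℝ, 0 ≤ t → ∀ x ∈ W, t • x ∈ W) :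
    PointedCone ℝ E where
  carrier := W
  add_mem' ha hb := hadd _ ha _ hb
  zero_mem' := by
    obtain ⟨w, hw⟩ := hne
    simpa using hsmul 0 le_rfl w hw
  smul_mem' c _ := hsmul c c.2 _

section InnerProductSpace

variable {E : Type*} [NormedAddCommGroup E] [InnerProductSpace ℝ E]

theorem norm_le_norm_add_of_inner_eq_zero {u v : E} (h : ⟪u, v⟫ = 0) : ‖u‖ ≤ ‖u + v‖ := by
  refine (mul_self_le_mul_self_iff (norm_nonneg _) (norm_nonneg _)).2 ?_
  rw [norm_add_sq_eq_norm_sq_add_norm_sq_real h]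
  exact le_add_of_nonneg_right (mul_self_nonneg _)

theorem Submodule.isMinOn_norm_sub_add_of_isMinOn_orthogonal_inter {L : Submodule ℝ E}
    [L.HasOrthogonalProjection] {W : Set E} (hW : ∀ y ∈ W, ∀ l ∈ L, y + l ∈ W) {xk xl p : E}
    (hxk : xk ∈ Lᗮ) (hxl : xl ∈ L) (hp : IsMinOn (‖xk - ·‖) (Lᗮ ∩ W) p) :
    IsMinOn (‖xk + xl - ·‖) W (p + xl) := by
  intro y hy
  set yl := L.starProjection y
  have hyl : yl ∈ L := L.starProjection_apply_mem y
  have hyk : y - yl ∈ Lᗮ := L.sub_starProjection_mem_orthogonal y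
  have hykW : y - yl ∈ W := by simpa [sub_eq_add_neg] using hW y hy (-yl) (L.neg_mem hyl)
  have horth : ⟪xk - (y - yl), xl - yl⟫ = 0 :=
    Submodule.inner_left_of_mem_orthogonal (L.sub_mem hxl hyl) (Submodule.sub_mem _ hxk hyk)
  calc ‖xk + xl - (p + xl)‖ = ‖xk - p‖ := by rw [add_sub_add_right_eq_sub]
    _ ≤ ‖xk - (y - yl)‖ := hp ⟨hyk, hykW⟩
    _ ≤ ‖xk - (y - yl) + (xl - yl)‖ := norm_le_norm_add_of_inner_eq_zero horth
    _ = ‖xk + xl - y‖ := by congr 1; abel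

end InnerProductSpace

theorem proj_wedge_eq_proj_cone_add_general (m : ℕ)
    (W : Set (EuclideanSpace ℝ (Fin m)))
    (hWne : W.Nonempty)
    (hWadd : ∀ x ∈ W, ∀ y ∈ W, x + y ∈ W)
    (hWsmul : ∀ t : ℝ, 0 ≤ t → ∀ x ∈ W, t • x ∈ W)
    (L : Set (EuclideanSpace ℝ (Fin m))) (hL : L = W ∩ (-W))
    (Lperp : Set (EuclideanSpace ℝ (Fin m)))
    (hLperp : Lperp = {y | ∀ x ∈ L, ⟪x, y⟫ = 0})
    (K : Set (EuclideanSpace ℝ (Fin m))) (hK : K = Lperp ∩ W)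
    (PW : EuclideanSpace ℝ (Fin m) → EuclideanSpace ℝ (Fin m))
    (hPW : ∀ x, PW x ∈ W ∧ ∀ y ∈ W, ‖x - PW x‖ ≤ ‖x - y‖)
    (PK : EuclideanSpace ℝ (Fin m) → EuclideanSpace ℝ (Fin m))
    (hPK : ∀ x ∈ Lperp, PK x ∈ K ∧ ∀ y ∈ K, ‖x - PK x‖ ≤ ‖x - y‖)
    (x xk xl : EuclideanSpace ℝ (Fin m))
    (hxk : xk ∈ Lperp) (hxl : xl ∈ L) (hx : x = xk + xl) :
    PW x = PK xk + xl := by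
  set C := PointedCone.ofSet W hWne hWadd hWsmul
  have hL' : L = C.lineal := by rw [hL]; rfl
  have hLperp' : Lperp = C.linealᗮ := by
    ext y
    rw [hLperp, hL']
    exact (Submodule.mem_orthogonal _ _).symm
  subst hLperp' hL' hK hx
  obtain ⟨hPK_mem, hPK_min⟩ := hPK xk hxk
  have hlineal_add : ∀ y ∈ W, ∀ l ∈ C.lineal, y + l ∈ W := fun y hy l hl =>
    hWadd y hy l (C.lineal_le hl)
  exact C.convex.eq_of_isMinOn_norm_sub (hPW _).1 (hlineal_add _ hPK_mem.2 _ hxl) (hPW _).2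
    (C.lineal.isMinOn_norm_sub_add_of_isMinOn_orthogonal_inter hlineal_add hxk hxl hPK_min)

/-- For a wedge `W` in `ℝ^m`, `L = W ∩ (-W)`, `K = L^⊥ ∩ W`,
and `x = x_k + x_l` the orthogonal decomposition of `x` with `x_k ∈ L^⊥`,
`x_l ∈ L`, the metric projection onto `W` satisfies `P_W x = P_K x_k + x_l`. -/
theorem proj_wedge_eq_proj_cone_add (m : ℕ)
    (W : Set (EuclideanSpace ℝ (Fin m)))
    (hWne : W.Nonempty) (hWcl : IsClosed W)
    (hWadd : ∀ x ∈ W, ∀ y ∈ W, x + y ∈ W)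
    (hWsmul : ∀ t : ℝ, 0 ≤ t → ∀ x ∈ W, t • x ∈ W)
    (L : Set (EuclideanSpace ℝ (Fin m))) (hL : L = W ∩ (-W))
    (Lperp : Set (EuclideanSpace ℝ (Fin m)))
    (hLperp : Lperp = {y | ∀ x ∈ L, ⟪x, y⟫ = 0})
    (K : Set (EuclideanSpace ℝ (Fin m))) (hK : K = Lperp ∩ W)
    (PW : EuclideanSpace ℝ (Fin m) → EuclideanSpace ℝ (Fin m))
    (hPW : ∀ x, PW x ∈ W ∧ ∀ y ∈ W, ‖x - PW x‖ ≤ ‖x - y‖)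
    (PK : EuclideanSpace ℝ (Fin m) → EuclideanSpace ℝ (Fin m))
    (hPK : ∀ x ∈ Lperp, PK x ∈ K ∧ ∀ y ∈ K, ‖x - PK x‖ ≤ ‖x - y‖)
    (x xk xl : EuclideanSpace ℝ (Fin m))
    (hxk : xk ∈ Lperp) (hxl : xl ∈ L) (hx : x = xk + xl) :
    PW x = PK xk + xl :=
  proj_wedge_eq_proj_cone_add_general m W hWne hWadd hWsmul L hL Lperp hLperp K hK PW hPW PK hPK x
    xk xl hxk hxl hx
end

section
/- Let W be a wedge in ℝ^m with L = W ∩ (−W) and K = L^⊥ ∩ W. Then the metric projection P_W is W-isotone (i.e., v − u ∈ W implies P_W v − P_W u ∈ W for all u, v ∈ ℝ^m) if and only if the metric projection P_K is K-isotone (i.e., v − u ∈ K implies P_K v − P_K u ∈ K for all u, v ∈ L^⊥). -/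
/-!
Translations by the lineality space `U = W ∩ (-W)` preserve `W`, so the `Uᗮ`-component of any
point of `W` lies in `K = Uᗮ ∩ W`. As the orthogonal projection onto `Uᗮ` does not increase
distances, the nearest point of `W` to `x` is then `P_U x + P_K (P_{Uᗮ} x)`: the map `P_W` is
the linear projection `P_U` plus `P_K ∘ P_{Uᗮ}`, and its isotonicity reduces to that of `P_K`.
-/

open scoped RealInnerProductSpace Pointwise

def IsNearestPoint {E : Type*} [NormedAddCommGroup E] (S : Set E) (x p : E) : Prop :=
  p ∈ S ∧ ∀ y ∈ S, ‖x - p‖ ≤ ‖x - y‖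

theorem IsNearestPoint.eq {E : Type*} [NormedAddCommGroup E] [NormedSpace ℝ E]
    [StrictConvexSpace ℝ E] {S : Set E} {x p q : E} (hS : Convex ℝ S)
    (hp : IsNearestPoint S x p) (hq : IsNearestPoint S x q) : p = q := by
  by_contra hne
  have hmid : (1 / 2 : ℝ) • p + (1 / 2 : ℝ) • q ∈ S :=
    hS hp.1 hq.1 (by norm_num) (by norm_num) (by norm_num)
  have hlt : ‖(1 / 2 : ℝ) • (x - p) + (1 / 2 : ℝ) • (x - q)‖ < ‖x - p‖ :=
    norm_combo_lt_of_ne le_rfl (hq.2 p hp.1) (fun h => hne (sub_right_injective h))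
      (by norm_num) (by norm_num) (by norm_num)
  have hle := hp.2 _ hmid
  rw [show x - ((1 / 2 : ℝ) • p + (1 / 2 : ℝ) • q)
      = (1 / 2 : ℝ) • (x - p) + (1 / 2 : ℝ) • (x - q) by module] at hle
  exact hle.not_gt hlt

section InvariantConvexSet

variable {E : Type*} [NormedAddCommGroup E] [InnerProductSpace ℝ E]
  {C : Set E} {U : Submodule ℝ E} [U.HasOrthogonalProjection]

theorem starProjection_orthogonal_mem_inter (hCU : ∀ c ∈ C, ∀ u ∈ U, c + u ∈ C) {y : E}
    (hy : y ∈ C) : Uᗮ.starProjection y ∈ (Uᗮ : Set E) ∩ C := by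
  refine ⟨Uᗮ.starProjection_apply_mem y, ?_⟩
  rw [Submodule.starProjection_orthogonal_val, sub_eq_add_neg]
  exact hCU y hy _ (U.neg_mem (U.starProjection_apply_mem y))

theorem IsNearestPoint.starProjection_add (hCU : ∀ c ∈ C, ∀ u ∈ U, c + u ∈ C) {x q : E}
    (hq : IsNearestPoint ((Uᗮ : Set E) ∩ C) (Uᗮ.starProjection x) q) :
    IsNearestPoint C x (U.starProjection x + q) := by
  refine ⟨add_comm q _ ▸ hCU q hq.1.2 _ (U.starProjection_apply_mem x), fun y hy => ?_⟩
  have hx : x - (U.starProjection x + q) = Uᗮ.starProjection x - q := by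
    rw [Submodule.starProjection_orthogonal_val]
    abel
  calc ‖x - (U.starProjection x + q)‖
      = ‖Uᗮ.starProjection x - q‖ := by rw [hx]
    _ ≤ ‖Uᗮ.starProjection x - Uᗮ.starProjection y‖ :=
        hq.2 _ (starProjection_orthogonal_mem_inter hCU hy)
    _ = ‖Uᗮ.starProjection (x - y)‖ := by rw [map_sub]
    _ ≤ ‖x - y‖ := Uᗮ.norm_starProjection_apply_le (x - y)

theorem isotone_iff_isotone_inter_orthogonal {PC PK : E → E} (hC : Convex ℝ C)
    (hCU : ∀ c ∈ C, ∀ u ∈ U, c + u ∈ C) (hPC : ∀ x, IsNearestPoint C x (PC x))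
    (hPK : ∀ x ∈ Uᗮ, IsNearestPoint ((Uᗮ : Set E) ∩ C) x (PK x)) :
    (∀ u v, v - u ∈ C → PC v - PC u ∈ C) ↔
      (∀ u ∈ Uᗮ, ∀ v ∈ Uᗮ,
        v - u ∈ (Uᗮ : Set E) ∩ C → PK v - PK u ∈ (Uᗮ : Set E) ∩ C) := by
  have hsplit (x : E) : PC x = U.starProjection x + PK (Uᗮ.starProjection x) :=
    (hPC x).eq hC ((hPK _ (Uᗮ.starProjection_apply_mem x)).starProjection_add hCU)
  have hPC_eq_PK {x : E} (hx : x ∈ Uᗮ) : PC x = PK x := by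
    rw [hsplit, U.starProjection_apply_eq_zero_iff.mpr hx,
      Submodule.starProjection_eq_self_iff.mpr hx, zero_add]
  constructor
  · intro hiso u hu v hv huv
    refine ⟨Uᗮ.sub_mem (hPK v hv).1.1 (hPK u hu).1.1, ?_⟩
    rw [← hPC_eq_PK hu, ← hPC_eq_PK hv]
    exact hiso u v huv.2
  · intro hiso u v huv
    have hperp : Uᗮ.starProjection v - Uᗮ.starProjection u ∈ (Uᗮ : Set E) ∩ C := by
      rw [← map_sub]
      exact starProjection_orthogonal_mem_inter hCU huv
    have hdiff : PC v - PC u = PK (Uᗮ.starProjection v) - PK (Uᗮ.starProjection u)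
        + U.starProjection (v - u) := by
      rw [hsplit u, hsplit v, map_sub]
      abel
    rw [hdiff]
    have hK := hiso _ (Uᗮ.starProjection_apply_mem u) _ (Uᗮ.starProjection_apply_mem v) hperp
    exact hCU _ hK.2 _ (U.starProjection_apply_mem _)

end InvariantConvexSet

theorem isotone_wedge_iff_isotone_cone_general (m : ℕ)
    (W : Set (EuclideanSpace ℝ (Fin m)))
    (hWne : W.Nonempty)
    (hWadd : ∀ x ∈ W, ∀ y ∈ W, x + y ∈ W)
    (hWsmul : ∀ t : ℝ, 0 ≤ t → ∀ x ∈ W, t • x ∈ W)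
    (L : Set (EuclideanSpace ℝ (Fin m))) (hL : L = W ∩ (-W))
    (Lperp : Set (EuclideanSpace ℝ (Fin m)))
    (hLperp : Lperp = {y | ∀ x ∈ L, ⟪x, y⟫ = 0})
    (K : Set (EuclideanSpace ℝ (Fin m))) (hK : K = Lperp ∩ W)
    (PW : EuclideanSpace ℝ (Fin m) → EuclideanSpace ℝ (Fin m))
    (hPW : ∀ x, PW x ∈ W ∧ ∀ y ∈ W, ‖x - PW x‖ ≤ ‖x - y‖)
    (PK : EuclideanSpace ℝ (Fin m) → EuclideanSpace ℝ (Fin m))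
    (hPK : ∀ x ∈ Lperp, PK x ∈ K ∧ ∀ y ∈ K, ‖x - PK x‖ ≤ ‖x - y‖) :
    (∀ u v : EuclideanSpace ℝ (Fin m), v - u ∈ W → PW v - PW u ∈ W) ↔
    (∀ u ∈ Lperp, ∀ v ∈ Lperp, v - u ∈ K → PK v - PK u ∈ K) := by
  obtain ⟨w, hw⟩ := hWne
  let cone : PointedCone ℝ (EuclideanSpace ℝ (Fin m)) :=
    { carrier := W
      add_mem' := fun hx hy => hWadd _ hx _ hy
      zero_mem' := by simpa using hWsmul 0 le_rfl w hw
      smul_mem' := fun t x hx => hWsmul t t.2 x hx }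
  have hLperp_eq : Lperp = (cone.linealᗮ : Submodule ℝ _) := by
    subst hLperp hL
    ext y
    simp [Submodule.mem_orthogonal, cone]
  subst hK
  rw [hLperp_eq] at hPK ⊢
  exact isotone_iff_isotone_inter_orthogonal (C := W) (U := cone.lineal) cone.convex
    (fun c hc u hu => cone.add_mem hc (cone.lineal_le hu)) hPW hPK

/-- For a wedge `W` in `ℝ^m`, `L = W ∩ (-W)`, `K = L^⊥ ∩ W`:
the metric projection `P_W` is `W`-isotone if and only if the metric
projection `P_K` (onto `K`, within `L^⊥`) is `K`-isotone. -/
theorem isotone_wedge_iff_isotone_cone (m : ℕ)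
    (W : Set (EuclideanSpace ℝ (Fin m)))
    (hWne : W.Nonempty) (hWcl : IsClosed W)
    (hWadd : ∀ x ∈ W, ∀ y ∈ W, x + y ∈ W)
    (hWsmul : ∀ t : ℝ, 0 ≤ t → ∀ x ∈ W, t • x ∈ W)
    (L : Set (EuclideanSpace ℝ (Fin m))) (hL : L = W ∩ (-W))
    (Lperp : Set (EuclideanSpace ℝ (Fin m)))
    (hLperp : Lperp = {y | ∀ x ∈ L, ⟪x, y⟫ = 0})
    (K : Set (EuclideanSpace ℝ (Fin m))) (hK : K = Lperp ∩ W)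
    (PW : EuclideanSpace ℝ (Fin m) → EuclideanSpace ℝ (Fin m))
    (hPW : ∀ x, PW x ∈ W ∧ ∀ y ∈ W, ‖x - PW x‖ ≤ ‖x - y‖)
    (PK : EuclideanSpace ℝ (Fin m) → EuclideanSpace ℝ (Fin m))
    (hPK : ∀ x ∈ Lperp, PK x ∈ K ∧ ∀ y ∈ K, ‖x - PK x‖ ≤ ‖x - y‖) :
    (∀ u v : EuclideanSpace ℝ (Fin m), v - u ∈ W → PW v - PW u ∈ W) ↔
    (∀ u ∈ Lperp, ∀ v ∈ Lperp, v - u ∈ K → PK v - PK u ∈ K) :=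
  isotone_wedge_iff_isotone_cone_general m W hWne hWadd hWsmul L hL Lperp hLperp K hK PW hPW PK hPK
end

section
/- Let W be a generating wedge in ℝ^m (i.e., W − W = ℝ^m). Then the metric projection P_W is W-isotone (i.e., v − u ∈ W implies P_W v − P_W u ∈ W) if and only if the polar W^⊥ is generated by a family of linearly independent vectors u_1, …, u_k having mutually non-acute angles, i.e., W^⊥ = {t^1 u_1 + ⋯ + t^k u_k : t^i ≥ 0} with u_1, …, u_k linearly independent and ⟨u_i, u_j⟩ ≤ 0 for all i ≠ j. -/
/-!
Write `D = W^⊥`. On a cone the metric projection is described by Moreau's decomposition: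
`x - P x ∈ D` and `⟪x - P x, P x⟫ = 0`.

If `D` is generated by linearly independent `u_i` with nonacute angles, the coefficients of
`x - P x` in the `u_i` satisfy complementary slackness with `P x`. For `a ≤_W b` the difference of
the coefficients of `a` and `b` is then nonnegative (the Gram matrix of the `u_i` is a Stieltjes
matrix), and this forces `⟪u_i, P b - P a⟫ ≤ 0` for every `i`, i.e. `P a ≤_W P b`.

Conversely, as `W` is generating it has an interior point, so `D` has a compact base
`{d ∈ D | ⟪e, d⟫ = 1}`. If two distinct exposed points `y`, `z` of the base made an acute angle,
one could find `a + α y ≤_W μ b`, with `a`, `b` exposing `y`, `z`, whose projections `a` and `μ b`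
are not ordered. So the exposed points are pairwise nonacute, hence linearly independent and
finitely many; and a compact set with finitely many exposed points is their convex hull, by a
farthest-point argument. Thus the exposed points generate `D`.
-/

open scoped RealInnerProductSpace Pointwise

variable {E : Type*} [NormedAddCommGroup E] [InnerProductSpace ℝ E]

section Nonacute

variable {ι : Type*} {u : ι → E}

lemma inner_sum_posPart_smul_sum_negPart_smul_nonpos (hu : Pairwise fun i j => ⟪u i, u j⟫ ≤ 0)
    (s : Finset ι) (c : ι → ℝ) : ⟪∑ i ∈ s, (c i)⁺ • u i, ∑ i ∈ s, (c i)⁻ • u i⟫ ≤ 0 := by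
  simp only [sum_inner, inner_sum, real_inner_smul_left, real_inner_smul_right]
  refine Finset.sum_nonpos fun i _ => Finset.sum_nonpos fun j _ => ?_
  rcases eq_or_ne i j with rfl | hij
  · rcases le_total (c i) 0 with h | h
    · simp [posPart_eq_zero.2 h]
    · simp [negPart_eq_zero.2 h]
  · exact mul_nonpos_of_nonneg_of_nonpos (negPart_nonneg _)
      (mul_nonpos_of_nonneg_of_nonpos (posPart_nonneg _) (hu hij.symm))

lemma linearIndependent_of_pairwise_inner_nonpos {e : E} (he : ∀ i, 0 < ⟪e, u i⟫)
    (hu : Pairwise fun i j => ⟪u i, u j⟫ ≤ 0) : LinearIndependent ℝ u := by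
  rw [linearIndependent_iff']
  intro s c hc
  have hzero : ∀ f : ι → ℝ, (∀ i, 0 ≤ f i) → ∑ i ∈ s, f i • u i = 0 → ∀ i ∈ s, f i = 0 := by
    intro f hf h0 i hi
    have hsum : ∑ j ∈ s, f j * ⟪e, u j⟫ = 0 := by
      simpa [inner_sum, real_inner_smul_right] using congrArg (⟪e, ·⟫) h0
    exact (mul_eq_zero.1 ((Finset.sum_eq_zero_iff_of_nonneg fun j _ =>
      mul_nonneg (hf j) (he j).le).1 hsum i hi)).resolve_right (he i).ne'
  have hsplit : ∑ i ∈ s, (c i)⁺ • u i = ∑ i ∈ s, (c i)⁻ • u i := by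
    rw [← sub_eq_zero, ← Finset.sum_sub_distrib]
    simpa only [← sub_smul, posPart_sub_negPart] using hc
  have hpos : ∑ i ∈ s, (c i)⁺ • u i = 0 := by
    rw [← real_inner_self_nonpos]
    nth_rw 2 [hsplit]
    exact inner_sum_posPart_smul_sum_negPart_smul_nonpos hu s c
  intro i hi
  rw [← posPart_sub_negPart (c i), hzero _ (fun _ => posPart_nonneg _) hpos i hi,
    hzero _ (fun _ => negPart_nonneg _) (hsplit ▸ hpos) i hi, sub_zero]

lemma nonneg_of_forall_neg_inner_sum_nonneg [Fintype ι] (hli : LinearIndependent ℝ u)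
    (hu : Pairwise fun i j => ⟪u i, u j⟫ ≤ 0) {δ : ι → ℝ}
    (hδ : ∀ j, δ j < 0 → 0 ≤ ⟪u j, ∑ i, δ i • u i⟫) (i : ι) : 0 ≤ δ i := by
  set U := ∑ i, δ i • u i
  set Uneg := ∑ i, (δ i)⁻ • u i
  have hU : U = ∑ i, (δ i)⁺ • u i - Uneg := by
    simp only [U, Uneg, ← Finset.sum_sub_distrib, ← sub_smul, posPart_sub_negPart]
  have hge : 0 ≤ ⟪Uneg, U⟫ := by
    rw [sum_inner]
    refine Finset.sum_nonneg fun j _ => ?_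
    rw [real_inner_smul_left]
    rcases lt_or_ge (δ j) 0 with h | h
    · exact mul_nonneg (negPart_nonneg _) (hδ j h)
    · rw [negPart_eq_zero.2 h, zero_mul]
  have hle : ⟪Uneg, U⟫ ≤ -⟪Uneg, Uneg⟫ := by
    rw [hU, inner_sub_right, real_inner_comm]
    linarith [inner_sum_posPart_smul_sum_negPart_smul_nonpos hu Finset.univ δ]
  have hUneg : Uneg = 0 := real_inner_self_nonpos.1 (by linarith)
  exact negPart_eq_zero.1 (Fintype.linearIndependent_iff.1 hli _ hUneg i)

end Nonacute

section ExposedPoints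

variable {K : Set E}

lemma mem_exposedPoints_of_forall_norm_sub_le {p x : E} (hx : x ∈ K)
    (hmax : ∀ y ∈ K, ‖y - p‖ ≤ ‖x - p‖) : x ∈ K.exposedPoints ℝ := by
  refine ⟨hx, innerSL ℝ (x - p), fun y hy => ?_⟩
  have hexp : ‖y - p‖ ^ 2 = ‖x - p‖ ^ 2 + 2 * ⟪x - p, y - x⟫ + ‖y - x‖ ^ 2 := by
    rw [← norm_add_sq_real, sub_add_sub_cancel']
  have hsq := pow_le_pow_left₀ (norm_nonneg _) (hmax y hy) 2
  have hle : 2 * ⟪x - p, y - x⟫ + ‖y - x‖ ^ 2 ≤ 0 := by linarith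
  rw [innerSL_apply_apply, innerSL_apply_apply]
  rw [inner_sub_right] at hle
  refine ⟨by nlinarith [sq_nonneg ‖y - x‖], fun hxy => ?_⟩
  have : ‖y - x‖ ^ 2 ≤ 0 := by linarith
  exact sub_eq_zero.1 (norm_eq_zero.1 (pow_eq_zero_iff two_ne_zero |>.1
    (le_antisymm this (sq_nonneg _))))

lemma IsCompact.exists_mem_exposedPoints_lt_inner (hK : IsCompact K) {v x₀ : E} {r : ℝ}
    (hx₀ : x₀ ∈ K) (hr : r < ⟪v, x₀⟫) : ∃ x ∈ K.exposedPoints ℝ, r < ⟪v, x⟫ := by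
  obtain ⟨ρ, hρ⟩ := hK.isBounded.exists_norm_le
  -- the farthest point of `K` from `-R • v` is exposed, and `R` is large enough to put it
  -- beyond the hyperplane `⟪v, ·⟫ = r`
  set R := (ρ ^ 2 + 1) / (2 * (⟪v, x₀⟫ - r))
  have hR : 2 * R * (⟪v, x₀⟫ - r) = ρ ^ 2 + 1 := by
    have : ⟪v, x₀⟫ - r ≠ 0 := (sub_pos.2 hr).ne'
    simp only [R]
    field_simp
  have hsq : ∀ y, ‖y - -(R • v)‖ ^ 2 = ‖y‖ ^ 2 + 2 * R * ⟪v, y⟫ + ‖R • v‖ ^ 2 := fun y => by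
    rw [sub_neg_eq_add, norm_add_sq_real, real_inner_smul_right, real_inner_comm]
    ring
  obtain ⟨x, hxK, hmax⟩ := hK.exists_isMaxOn ⟨x₀, hx₀⟩
    (continuous_id.sub continuous_const).norm.continuousOn (f := fun y => ‖y - -(R • v)‖)
  refine ⟨x, mem_exposedPoints_of_forall_norm_sub_le hxK fun y hy => hmax hy, ?_⟩
  have h₀ := pow_le_pow_left₀ (norm_nonneg _) (hmax hx₀) 2
  have hx := pow_le_pow_left₀ (norm_nonneg _) (hρ x hxK) 2
  simp only [hsq] at h₀
  nlinarith [sq_nonneg ‖x₀‖]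

lemma IsCompact.subset_convexHull_exposedPoints [CompleteSpace E] (hK : IsCompact K)
    (hfin : (K.exposedPoints ℝ).Finite) : K ⊆ convexHull ℝ (K.exposedPoints ℝ) := by
  intro x hx
  by_contra hx'
  obtain ⟨f, r, hf, hr⟩ := geometric_hahn_banach_closed_point (convex_convexHull ℝ _)
    (hfin.isCompact_convexHull ℝ).isClosed hx'
  obtain ⟨y, hy, hry⟩ := hK.exists_mem_exposedPoints_lt_inner
    (v := (InnerProductSpace.toDual ℝ E).symm f) hx (by rwa [InnerProductSpace.toDual_symm_apply])
  rw [InnerProductSpace.toDual_symm_apply] at hry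
  exact (hf y (subset_convexHull ℝ _ hy)).not_gt hry

end ExposedPoints

lemma IsCompact.exists_mul_add_nonpos {X : Type*} [TopologicalSpace X] {K : Set X}
    (hK : IsCompact K) {f g : X → ℝ} (hf : Continuous f) (hg : Continuous g)
    (hf0 : ∀ x ∈ K, f x ≤ 0) (hfg : ∀ x ∈ K, 0 ≤ g x → f x < 0) :
    ∃ μ ≥ 0, ∀ x ∈ K, μ * f x + g x ≤ 0 := by
  set C := K ∩ {x | 0 ≤ g x}
  have hC : IsCompact C := hK.inter_right (isClosed_le continuous_const hg)
  have hcont : ContinuousOn (fun x => g x / -f x) C :=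
    hg.continuousOn.div hf.neg.continuousOn fun x hx => (neg_pos.2 (hfg x hx.1 hx.2)).ne'
  obtain ⟨M, hM⟩ := hC.bddAbove_image hcont
  refine ⟨max M 0, le_max_right _ _, fun x hx => ?_⟩
  by_cases hgx : 0 ≤ g x
  · have hfx := neg_pos.2 (hfg x hx hgx)
    have : g x / -f x ≤ max M 0 := (hM ⟨x, ⟨hx, hgx⟩, rfl⟩).trans (le_max_left _ _)
    rw [div_le_iff₀ hfx] at this
    linarith
  · nlinarith [hf0 x hx, le_max_right M 0]

namespace IsotoneProjection

def polar (s : Set E) : Set E := {y | ∀ x ∈ s, ⟪x, y⟫ ≤ 0}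

def base (D : Set E) (e : E) : Set E := {d ∈ D | ⟪e, d⟫ = 1}

def IsMetricProjection (s : Set E) (P : E → E) : Prop :=
  ∀ x, P x ∈ s ∧ ∀ y ∈ s, ‖x - P x‖ ≤ ‖x - y‖

section Polar

variable {ι : Type*} {u : ι → E} {s : Set E} {x y : E}

lemma isClosed_polar (s : Set E) : IsClosed (polar s) := by
  simp only [polar, Set.ofPred_forall]
  exact isClosed_biInter fun x _ =>
    isClosed_le (continuous_const.inner continuous_id) continuous_const

lemma smul_mem_polar {t : ℝ} (ht : 0 ≤ t) (hy : y ∈ polar s) : t • y ∈ polar s := fun x hx => by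
  rw [real_inner_smul_right]
  exact mul_nonpos_of_nonneg_of_nonpos ht (hy x hx)

lemma mem_hull_range_iff [Fintype ι] :
    x ∈ PointedCone.hull ℝ (Set.range u) ↔ ∃ t : ι → ℝ, (∀ i, 0 ≤ t i) ∧ x = ∑ i, t i • u i := by
  rw [Submodule.mem_span_range_iff_exists_fun]
  constructor
  · rintro ⟨c, rfl⟩
    exact ⟨fun i => c i, fun i => (c i).2, rfl⟩
  · rintro ⟨t, ht, rfl⟩
    exact ⟨fun i => ⟨t i, ht i⟩, rfl⟩

lemma hull_range_subset_polar [Fintype ι] (hu : ∀ i, u i ∈ polar s) :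
    (PointedCone.hull ℝ (Set.range u) : Set E) ⊆ polar s := by
  intro y hy
  obtain ⟨t, ht, rfl⟩ := mem_hull_range_iff.1 hy
  intro x hx
  rw [inner_sum]
  exact Finset.sum_nonpos fun i _ => smul_mem_polar (ht i) (hu i) x hx

lemma mem_polar_hull_range [Fintype ι] (hx : ∀ i, ⟪u i, x⟫ ≤ 0) :
    x ∈ polar (PointedCone.hull ℝ (Set.range u)) := by
  intro y hy
  obtain ⟨t, ht, rfl⟩ := mem_hull_range_iff.1 hy
  rw [sum_inner]
  exact Finset.sum_nonpos fun i _ => by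
    rw [real_inner_smul_left]; exact mul_nonpos_of_nonneg_of_nonpos (ht i) (hx i)

end Polar

section MetricProjection

variable {s : Set E} {K : PointedCone ℝ E} {P : E → E} {p z : E}

lemma IsMetricProjection.inner_sub_le_zero (hP : IsMetricProjection s P) (hs : Convex ℝ s)
    (x : E) {y : E} (hy : y ∈ s) : ⟪x - P x, y - P x⟫ ≤ 0 := by
  have : Nonempty s := ⟨⟨P x, (hP x).1⟩⟩
  have hinf : ‖x - P x‖ = ⨅ y : s, ‖x - y‖ :=
    le_antisymm (le_ciInf fun y => (hP x).2 y y.2)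
      (ciInf_le (f := fun y : s => ‖x - y‖) ⟨0, Set.forall_mem_range.2 fun _ => norm_nonneg _⟩
        ⟨P x, (hP x).1⟩)
  exact (norm_eq_iInf_iff_real_inner_le_zero hs (hP x).1).1 hinf y hy

lemma IsMetricProjection.eq_of_inner_sub_le_zero (hP : IsMetricProjection s P) {x p : E}
    (hp : p ∈ s) (h : ∀ y ∈ s, ⟪x - p, y - p⟫ ≤ 0) : P x = p := by
  have hexp : ‖x - P x‖ ^ 2 = ‖x - p‖ ^ 2 - 2 * ⟪x - p, P x - p⟫ + ‖P x - p‖ ^ 2 := by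
    rw [← norm_sub_sq_real, sub_sub_sub_cancel_right]
  have hle := pow_le_pow_left₀ (norm_nonneg _) ((hP x).2 p hp) 2
  have : ‖P x - p‖ ^ 2 ≤ 0 := by linarith [h _ (hP x).1]
  exact sub_eq_zero.1 (norm_eq_zero.1 (pow_eq_zero_iff two_ne_zero |>.1
    (le_antisymm this (sq_nonneg _))))

lemma IsMetricProjection.apply_eq_self (hP : IsMetricProjection s P) {x : E} (hx : x ∈ s) :
    P x = x :=
  hP.eq_of_inner_sub_le_zero hx fun y _ => by rw [sub_self, inner_zero_left]

lemma forall_inner_sub_le_zero_iff (hp : p ∈ K) :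
    (∀ y ∈ K, ⟪z, y - p⟫ ≤ 0) ↔ z ∈ polar K ∧ ⟪z, p⟫ = 0 := by
  constructor
  · intro h
    have h0 : 0 ≤ ⟪z, p⟫ := by simpa [inner_neg_right] using h 0 K.zero_mem
    have h2 : ⟪z, p⟫ ≤ 0 := by simpa [two_smul] using h ((2 : ℝ) • p) (K.smul_mem zero_le_two hp)
    have horth := le_antisymm h2 h0
    refine ⟨fun y hy => ?_, horth⟩
    simpa [inner_sub_right, horth, real_inner_comm] using h y hy
  · rintro ⟨hz, horth⟩ y hy
    rw [inner_sub_right, horth, sub_zero, real_inner_comm]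
    exact hz y hy

lemma IsMetricProjection.sub_mem_polar (hP : IsMetricProjection K P) (x : E) :
    x - P x ∈ polar K ∧ ⟪x - P x, P x⟫ = 0 :=
  (forall_inner_sub_le_zero_iff (hP x).1).1 fun _ hy => hP.inner_sub_le_zero K.convex x hy

lemma IsMetricProjection.polar_polar_subset (hP : IsMetricProjection K P) :
    polar (polar K) ⊆ (K : Set E) := by
  intro x hx
  obtain ⟨hpol, horth⟩ := hP.sub_mem_polar x
  have : ⟪x - P x, x - P x⟫ ≤ 0 := by
    rw [inner_sub_right, horth, sub_zero]
    exact hx _ hpol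
  rw [sub_eq_zero.1 (real_inner_self_nonpos.1 this)]
  exact (hP x).1

end MetricProjection

section Sufficiency

variable {ι : Type*} {u : ι → E} {K : PointedCone ℝ E} {P : E → E}

lemma inner_nonpos_of_polar_eq_hull
    (hpol : polar K = (PointedCone.hull ℝ (Set.range u) : Set E)) (i : ι) {x : E} (hx : x ∈ K) :
    ⟪u i, x⟫ ≤ 0 := by
  have hi : u i ∈ polar K := hpol ▸ PointedCone.subset_hull (Set.mem_range_self i)
  exact real_inner_comm x (u i) ▸ hi x hx

lemma IsMetricProjection.exists_sub_eq_sum_smul [Fintype ι] (hP : IsMetricProjection K P)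
    (hpol : polar K = (PointedCone.hull ℝ (Set.range u) : Set E)) (x : E) :
    ∃ t : ι → ℝ, (∀ i, 0 ≤ t i) ∧ x - P x = ∑ i, t i • u i ∧ ∀ i, t i * ⟪u i, P x⟫ = 0 := by
  obtain ⟨hmem, horth⟩ := hP.sub_mem_polar x
  obtain ⟨t, ht, hx⟩ := mem_hull_range_iff.1 (hpol ▸ hmem)
  refine ⟨t, ht, hx, fun i => ?_⟩
  have hsum : ∑ i, t i * ⟪u i, P x⟫ = 0 := by
    simpa only [hx, sum_inner, real_inner_smul_left] using horth
  exact (Finset.sum_eq_zero_iff_of_nonpos fun j _ => mul_nonpos_of_nonneg_of_nonpos (ht j)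
    (inner_nonpos_of_polar_eq_hull hpol j (hP x).1)).1 hsum i (Finset.mem_univ i)

theorem IsMetricProjection.isotone_of_polar_eq_hull [Fintype ι] (hP : IsMetricProjection K P)
    (hli : LinearIndependent ℝ u) (hu : Pairwise fun i j => ⟪u i, u j⟫ ≤ 0)
    (hpol : polar K = (PointedCone.hull ℝ (Set.range u) : Set E)) {a b : E} (hab : b - a ∈ K) :
    P b - P a ∈ K := by
  have hin := inner_nonpos_of_polar_eq_hull hpol
  obtain ⟨t, ht, hta, htc⟩ := hP.exists_sub_eq_sum_smul hpol a
  obtain ⟨s, hs, hsb, hsc⟩ := hP.exists_sub_eq_sum_smul hpol b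
  have hinner : ∀ j, ⟪u j, P b - P a⟫ = ⟪u j, b - a⟫ + ⟪u j, ∑ i, (t i - s i) • u i⟫ := by
    intro j
    rw [← inner_add_right]
    congr 1
    simp only [sub_smul, Finset.sum_sub_distrib, ← hta, ← hsb]
    abel
  have hδ : ∀ i, 0 ≤ t i - s i := nonneg_of_forall_neg_inner_sum_nonneg hli hu fun j hj => by
    have hPb : ⟪u j, P b⟫ = 0 := (mul_eq_zero.1 (hsc j)).resolve_left (by linarith [ht j])
    have := hinner j
    rw [inner_sub_right, hPb] at this
    linarith [hin j hab, hin j (hP a).1]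
  refine hP.polar_polar_subset ?_
  rw [hpol]
  refine mem_polar_hull_range fun j => ?_
  by_contra! hj
  have hPa : ⟪u j, P a⟫ < 0 := by
    rw [inner_sub_right] at hj
    linarith [hin j (hP b).1]
  have htj : t j = 0 := (mul_eq_zero.1 (htc j)).resolve_right hPa.ne
  have hδj : t j - s j = 0 := le_antisymm (by linarith [hs j]) (hδ j)
  have hUj : ⟪u j, ∑ i, (t i - s i) • u i⟫ ≤ 0 := by
    rw [inner_sum]
    refine Finset.sum_nonpos fun i _ => ?_
    rw [real_inner_smul_right]
    rcases eq_or_ne i j with rfl | hij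
    · rw [hδj, zero_mul]
    · exact mul_nonpos_of_nonneg_of_nonpos (hδ i) (hu hij.symm)
  linarith [hinner j, hin j hab]

end Sufficiency

section Necessity

variable {s : Set E} {e x y : E} {c : ℝ}

lemma inv_inner_smul_mem_base (hy : y ∈ polar s) (hey : 0 < ⟪e, y⟫) :
    ⟪e, y⟫⁻¹ • y ∈ base (polar s) e :=
  ⟨smul_mem_polar (inv_nonneg.2 hey.le) hy, by rw [real_inner_smul_right, inv_mul_cancel₀ hey.ne']⟩

lemma inner_pos_of_mul_norm_le (hc : 0 < c) (he : ∀ y ∈ polar s, c * ‖y‖ ≤ ⟪e, y⟫) :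
    ∀ y ∈ polar s, y ≠ 0 → 0 < ⟪e, y⟫ := fun y hy hy0 =>
  (mul_pos hc (norm_pos_iff.2 hy0)).trans_le (he y hy)

lemma mem_polar_polar_of_forall_base (he : ∀ y ∈ polar s, y ≠ 0 → 0 < ⟪e, y⟫)
    (hx : ∀ d ∈ base (polar s) e, ⟪d, x⟫ ≤ 0) : x ∈ polar (polar s) := by
  intro y hy
  rcases eq_or_ne y 0 with rfl | hy0
  · rw [inner_zero_left]
  have hey := he y hy hy0
  rw [← smul_inv_smul₀ hey.ne' y, real_inner_smul_left]
  exact mul_nonpos_of_nonneg_of_nonpos hey.le (hx _ (inv_inner_smul_mem_base hy hey))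

lemma isCompact_base [ProperSpace E] (hc : 0 < c) (he : ∀ y ∈ polar s, c * ‖y‖ ≤ ⟪e, y⟫) :
    IsCompact (base (polar s) e) := by
  refine (isCompact_closedBall (0 : E) (1 / c)).of_isClosed_subset
    ((isClosed_polar s).inter (isClosed_eq (continuous_const.inner continuous_id)
      continuous_const)) fun d hd => ?_
  have := he d hd.1
  rw [hd.2] at this
  rw [mem_closedBall_zero_iff, le_div_iff₀ hc]
  linarith

lemma exists_inner_ge_mul_norm_of_sub_eq_univ [FiniteDimensional ℝ E] (hconv : Convex ℝ s)
    (hne : s.Nonempty) (hgen : s - s = Set.univ) :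
    ∃ e : E, ∃ c > 0, ∀ y ∈ polar s, c * ‖y‖ ≤ ⟪e, y⟫ := by
  have hint : (interior s).Nonempty := by
    rw [hconv.interior_nonempty_iff_affineSpan_eq_top,
      AffineSubspace.affineSpan_eq_top_iff_vectorSpan_eq_top_of_nonempty ℝ E E hne, vectorSpan_def,
      show s -ᵥ s = s - s from rfl, hgen, Submodule.span_univ]
  obtain ⟨x, hx⟩ := hint
  obtain ⟨ε, hε, hball⟩ :=
    Metric.nhds_basis_closedBall.mem_iff.1 (mem_interior_iff_mem_nhds.1 hx)
  refine ⟨-x, ε, hε, fun y hy => ?_⟩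
  rcases eq_or_ne y 0 with rfl | hy0
  · simp
  have hny : 0 < ‖y‖ := norm_pos_iff.2 hy0
  have hmem : x + (ε / ‖y‖) • y ∈ s := hball (by
    rw [Metric.mem_closedBall, dist_eq_norm, add_sub_cancel_left, norm_smul,
      Real.norm_of_nonneg (by positivity), div_mul_cancel₀ _ hny.ne'])
  have hxy := hy _ hmem
  rw [inner_add_left, real_inner_smul_left, real_inner_self_eq_norm_sq] at hxy
  have : ε / ‖y‖ * ‖y‖ ^ 2 = ε * ‖y‖ := by field_simp
  rw [inner_neg_left]
  linarith

lemma exists_exposing_of_mem_exposedPoints [CompleteSpace E]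
    (he : ∀ y ∈ polar s, y ≠ 0 → 0 < ⟪e, y⟫) (hx : x ∈ (base (polar s) e).exposedPoints ℝ) :
    ∃ a ∈ polar (polar s), ⟪x, a⟫ = 0 ∧ ∀ d ∈ polar s, ⟪d, a⟫ = 0 → d = ⟪e, d⟫ • x := by
  obtain ⟨hxB, l, hl⟩ := hx
  set a := (InnerProductSpace.toDual ℝ E).symm l - l x • e
  have haB : ∀ d ∈ base (polar s) e, ⟪d, a⟫ = l d - l x := fun d hd => by
    rw [inner_sub_right, real_inner_comm, InnerProductSpace.toDual_symm_apply,
      real_inner_smul_right, real_inner_comm, hd.2, mul_one]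
  refine ⟨a, mem_polar_polar_of_forall_base he fun d hd => ?_, by rw [haB x hxB, sub_self],
    fun d hd hda => ?_⟩
  · rw [haB d hd]
    linarith [(hl d hd).1]
  rcases eq_or_ne d 0 with rfl | hd0
  · simp
  have hed := he d hd hd0
  have hd' := inv_inner_smul_mem_base hd hed
  have hda' := haB _ hd'
  rw [real_inner_smul_left, hda, mul_zero] at hda'
  rw [← (hl _ hd').2 (by linarith), smul_inv_smul₀ hed.ne']

lemma exists_smul_add_mem_polar_polar [ProperSpace E] (hc : 0 < c)
    (he : ∀ y ∈ polar s, c * ‖y‖ ≤ ⟪e, y⟫) {b g z : E} (hb : b ∈ polar (polar s))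
    (hbz : ∀ d ∈ polar s, ⟪d, b⟫ = 0 → d = ⟪e, d⟫ • z) (hgz : ⟪z, g⟫ < 0) :
    ∃ μ ≥ (0 : ℝ), μ • b + g ∈ polar (polar s) := by
  have hneg : ∀ d ∈ base (polar s) e, 0 ≤ ⟪d, g⟫ → ⟪d, b⟫ < 0 := fun d hd hgd =>
    (hb d hd.1).lt_of_ne fun h => by
      rw [hbz d hd.1 h, hd.2, one_smul] at hgd
      linarith
  obtain ⟨μ, hμ, hμB⟩ := (isCompact_base hc he).exists_mul_add_nonpos
    (continuous_id.inner continuous_const) (continuous_id.inner continuous_const)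
    (fun d hd => hb d hd.1) hneg
  refine ⟨μ, hμ, mem_polar_polar_of_forall_base (inner_pos_of_mul_norm_le hc he) fun d hd => ?_⟩
  simpa only [inner_add_right, real_inner_smul_right, id] using hμB d hd

theorem exists_polar_eq_hull_of_pairwise_inner_nonpos [FiniteDimensional ℝ E] (hc : 0 < c)
    (he : ∀ y ∈ polar s, c * ‖y‖ ≤ ⟪e, y⟫)
    (hX : ((base (polar s) e).exposedPoints ℝ).Pairwise fun y z => ⟪y, z⟫ ≤ 0) :
    ∃ (k : ℕ) (u : Fin k → E), LinearIndependent ℝ u ∧ Pairwise (fun i j => ⟪u i, u j⟫ ≤ 0) ∧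
      polar s = (PointedCone.hull ℝ (Set.range u) : Set E) := by
  set X := (base (polar s) e).exposedPoints ℝ
  have hli : LinearIndependent ℝ (Subtype.val : X → E) :=
    linearIndependent_of_pairwise_inner_nonpos (e := e) (fun x => x.2.1.2 ▸ one_pos)
      fun x y hxy => hX x.2 y.2 (Subtype.coe_ne_coe.2 hxy)
  have : Finite X := hli.finite
  obtain ⟨k, ⟨σ⟩⟩ := Finite.exists_equiv_fin X
  set u : Fin k → E := Subtype.val ∘ σ.symm
  have hrange : Set.range u = X := by
    rw [Set.range_comp, σ.symm.range_eq_univ, Set.image_univ, Subtype.range_coe]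
  refine ⟨k, u, hli.comp _ σ.symm.injective, fun i j hij => hX (σ.symm i).2 (σ.symm j).2
    (Subtype.coe_ne_coe.2 (σ.symm.injective.ne hij)), subset_antisymm (fun d hd => ?_)
    (hull_range_subset_polar fun i => (σ.symm i).2.1.1)⟩
  rcases eq_or_ne d 0 with rfl | hd0
  · exact zero_mem _
  have hed := inner_pos_of_mul_norm_le hc he d hd hd0
  have hd' : ⟪e, d⟫⁻¹ • d ∈ PointedCone.hull ℝ (Set.range u) :=
    convexHull_min (hrange ▸ PointedCone.subset_hull) (PointedCone.convex _)
      ((isCompact_base hc he).subset_convexHull_exposedPoints (Set.toFinite X)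
        (inv_inner_smul_mem_base hd hed))
  rw [← smul_inv_smul₀ hed.ne' d]
  exact PointedCone.smul_mem _ hed.le hd'

theorem IsMetricProjection.pairwise_inner_nonpos_of_isotone [FiniteDimensional ℝ E]
    {K : PointedCone ℝ E} {P : E → E} (hP : IsMetricProjection K P)
    (hiso : ∀ a b, b - a ∈ K → P b - P a ∈ K) (hc : 0 < c)
    (he : ∀ y ∈ polar K, c * ‖y‖ ≤ ⟪e, y⟫) :
    ((base (polar K) e).exposedPoints ℝ).Pairwise fun y z => ⟪y, z⟫ ≤ 0 := by
  have he' := inner_pos_of_mul_norm_le hc he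
  intro y hy z hz hyz
  by_contra! hpos
  -- `a` exposes `y` and `b` exposes `z`: then `a + α • y ≤ μ • b`, and these two points project
  -- to `a` and `μ • b`, which are not ordered since `⟪z, a⟫ < 0 = ⟪z, b⟫`
  obtain ⟨a, haK, hay, ha⟩ := exists_exposing_of_mem_exposedPoints he' hy
  obtain ⟨b, hbK, hbz, hb⟩ := exists_exposing_of_mem_exposedPoints he' hz
  obtain ⟨⟨hyD, -⟩, -⟩ := hy
  obtain ⟨⟨hzD, hez⟩, -⟩ := hz
  have haz : ⟪z, a⟫ < 0 :=
    (haK z hzD).lt_of_ne fun h => hyz (by rw [ha z hzD h, hez, one_smul])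
  set α := (1 - ⟪z, a⟫) / ⟪y, z⟫
  have hα : 0 < α := div_pos (by linarith) hpos
  have hαz : ⟪z, a⟫ + α * ⟪y, z⟫ = 1 := by
    simp only [α]
    field_simp
    ring
  obtain ⟨μ, hμ, hw⟩ := exists_smul_add_mem_polar_polar hc he hbK hb (g := -(a + α • y)) (by
    rw [inner_neg_right, inner_add_right, real_inner_smul_right, real_inner_comm y]
    linarith)
  rw [← sub_eq_add_neg] at hw
  have haK' := hP.polar_polar_subset haK
  have hPa : P (a + α • y) = a := by
    refine hP.eq_of_inner_sub_le_zero haK' ((forall_inner_sub_le_zero_iff haK').2 ?_)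
    rw [add_sub_cancel_left, real_inner_smul_left, hay, mul_zero]
    exact ⟨smul_mem_polar hα.le hyD, rfl⟩
  have hPb : P (μ • b) = μ • b := hP.apply_eq_self (K.smul_mem hμ (hP.polar_polar_subset hbK))
  have hcontra := hzD _ (hiso _ _ (hP.polar_polar_subset hw))
  rw [hPa, hPb, inner_sub_left, real_inner_smul_left, real_inner_comm, hbz,
    real_inner_comm] at hcontra
  linarith

end Necessity

end IsotoneProjection

open IsotoneProjection in
theorem isotone_iff_polar_generated_by_nonacute_general (m : ℕ)
    (W : Set (EuclideanSpace ℝ (Fin m)))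
    (hWne : W.Nonempty)
    (hWadd : ∀ x ∈ W, ∀ y ∈ W, x + y ∈ W)
    (hWsmul : ∀ t : ℝ, 0 ≤ t → ∀ x ∈ W, t • x ∈ W)
    (hWgen : W - W = Set.univ)
    (PW : EuclideanSpace ℝ (Fin m) → EuclideanSpace ℝ (Fin m))
    (hPW : ∀ x, PW x ∈ W ∧ ∀ y ∈ W, ‖x - PW x‖ ≤ ‖x - y‖) :
    (∀ u v : EuclideanSpace ℝ (Fin m), v - u ∈ W → PW v - PW u ∈ W) ↔
    (∃ (k : ℕ) (u : Fin k → EuclideanSpace ℝ (Fin m)),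
      LinearIndependent ℝ u ∧
      (∀ i j : Fin k, i ≠ j → ⟪u i, u j⟫ ≤ 0) ∧
      {y | ∀ x ∈ W, ⟪x, y⟫ ≤ 0} =
        {y | ∃ t : Fin k → ℝ, (∀ i, 0 ≤ t i) ∧ y = ∑ i, t i • u i}) := by
  let K : PointedCone ℝ (EuclideanSpace ℝ (Fin m)) := .ofConeComb W hWne
    fun x hx y hy a ha b hb => hWadd _ (hWsmul a ha x hx) _ (hWsmul b hb y hy)
  have hP : IsMetricProjection K PW := hPW
  have hull_eq {k : ℕ} (u : Fin k → EuclideanSpace ℝ (Fin m)) :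
      (PointedCone.hull ℝ (Set.range u) : Set _) =
        {y | ∃ t : Fin k → ℝ, (∀ i, 0 ≤ t i) ∧ y = ∑ i, t i • u i} :=
    Set.ext fun _ => mem_hull_range_iff
  constructor
  · intro hiso
    obtain ⟨e, c, hc, he⟩ := exists_inner_ge_mul_norm_of_sub_eq_univ K.convex hWne hWgen
    obtain ⟨k, u, hli, hu, hpol⟩ := exists_polar_eq_hull_of_pairwise_inner_nonpos hc he
      (hP.pairwise_inner_nonpos_of_isotone hiso hc he)
    exact ⟨k, u, hli, fun i j hij => hu hij, hpol.trans (hull_eq u)⟩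
  · rintro ⟨k, u, hli, hu, hpol⟩ a b hab
    exact hP.isotone_of_polar_eq_hull hli (fun i j hij => hu i j hij)
      (hpol.trans (hull_eq u).symm) hab

/-- A generating wedge `W` in `ℝ^m` admits a `W`-isotone
metric projection if and only if its polar `W^⊥` is the cone generated by
linearly independent vectors forming mutually non-acute angles. -/
theorem isotone_iff_polar_generated_by_nonacute (m : ℕ)
    (W : Set (EuclideanSpace ℝ (Fin m)))
    (hWne : W.Nonempty) (hWcl : IsClosed W)
    (hWadd : ∀ x ∈ W, ∀ y ∈ W, x + y ∈ W)
    (hWsmul : ∀ t : ℝ, 0 ≤ t → ∀ x ∈ W, t • x ∈ W)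
    (hWgen : W - W = Set.univ)
    (PW : EuclideanSpace ℝ (Fin m) → EuclideanSpace ℝ (Fin m))
    (hPW : ∀ x, PW x ∈ W ∧ ∀ y ∈ W, ‖x - PW x‖ ≤ ‖x - y‖) :
    (∀ u v : EuclideanSpace ℝ (Fin m), v - u ∈ W → PW v - PW u ∈ W) ↔
    (∃ (k : ℕ) (u : Fin k → EuclideanSpace ℝ (Fin m)),
      LinearIndependent ℝ u ∧
      (∀ i j : Fin k, i ≠ j → ⟪u i, u j⟫ ≤ 0) ∧
      {y | ∀ x ∈ W, ⟪x, y⟫ ≤ 0} =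
        {y | ∃ t : Fin k → ℝ, (∀ i, 0 ≤ t i) ∧ y = ∑ i, t i • u i}) :=
  isotone_iff_polar_generated_by_nonacute_general m W hWne hWadd hWsmul hWgen PW hPW
end

section
/- Let W be the monotone wedge in ℝ^m, L = W ∩ (−W), and K = L^⊥ ∩ W. Then the metric projection P_K onto K is K-isotone: for all u, v ∈ L^⊥ with v − u ∈ K, one has P_K v − P_K u ∈ K. -/
/-!
Through prefix sums, `K` becomes the set of concave sequences on `{0, …, m}` vanishing at both
ends, and `P_K w` becomes the least concave majorant `A` of the prefix sums `U` of `w`: testing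
the variational inequality of the projection against indicators of initial segments shows
`U ≤ A`, with contact at the ends and at every kink of `A`.

Let `B` be the majorant for `v` and `D = V - U`, which is concave when `v - u ∈ K`. The excess
`(B - A) - D` vanishes at the ends and is convex wherever it is positive, because `B` has no kink
where it lies strictly above `V`; by a discrete maximum principle it is `≤ 0`. At a kink of `A`
it therefore attains its maximum `0`, which squeezes the increments of `B - A` around those of
the concave `D`; away from the kinks of `A`, `B - A` inherits the concavity of `B`.
-/

open scoped RealInnerProductSpace Pointwise
open Finset

def ConcaveOnIic (n : ℕ) (f : ℕ → ℝ) : Prop :=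
  ∀ t, t + 2 ≤ n → f (t + 2) - f (t + 1) ≤ f (t + 1) - f t

/-- These conditions characterise `A` as the least concave majorant of `U` on `{0, …, n}`. -/
structure IsTightConcaveMajorant (n : ℕ) (U A : ℕ → ℝ) : Prop where
  concave : ConcaveOnIic n A
  le : ∀ k ≤ n, U k ≤ A k
  eq_zero : A 0 = U 0
  eq_top : A n = U n
  eq_of_kink : ∀ t, t + 2 ≤ n → A (t + 2) - A (t + 1) < A (t + 1) - A t → A (t + 1) = U (t + 1)

theorem nonpos_of_convex_where_pos {n : ℕ} {E : ℕ → ℝ} (h0 : E 0 ≤ 0) (hn : E n ≤ 0)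
    (hconv : ∀ t, t + 2 ≤ n → 0 < E (t + 1) → E (t + 1) - E t ≤ E (t + 2) - E (t + 1)) :
    ∀ k ≤ n, E k ≤ 0 := by
  classical
  obtain ⟨k₀, hk₀, hmax⟩ := (range (n + 1)).exists_max_image E nonempty_range_add_one
  have hex : ∃ k, k ≤ n ∧ ∀ j ≤ n, E j ≤ E k :=
    ⟨k₀, Nat.lt_succ_iff.1 (mem_range.1 hk₀), fun j hj => hmax j (mem_range.2 (by omega))⟩
  obtain ⟨hkn, hk⟩ := Nat.find_spec hex
  suffices E (Nat.find hex) ≤ 0 from fun j hj => (hk j hj).trans this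
  by_contra! hpos
  obtain ⟨t, ht⟩ : ∃ t, Nat.find hex = t + 1 :=
    Nat.exists_eq_succ_of_ne_zero fun h => by rw [h] at hpos; linarith
  have htn : t + 2 ≤ n := by
    have : Nat.find hex ≠ n := fun h => by rw [h] at hpos; linarith
    omega
  rw [ht] at hk hpos
  have hprev : E t < E (t + 1) := by
    by_contra! h
    exact Nat.find_min hex (by omega : t < Nat.find hex) ⟨by omega, fun j hj => (hk j hj).trans h⟩
  linarith [hconv t htn hpos, hk (t + 2) htn]

namespace IsTightConcaveMajorant

variable {n : ℕ} {U V A B : ℕ → ℝ}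

theorem sub_le_sub (hA : IsTightConcaveMajorant n U A) (hB : IsTightConcaveMajorant n V B)
    (hD : ConcaveOnIic n (V - U)) : ∀ k ≤ n, B k - A k ≤ V k - U k := by
  have := nonpos_of_convex_where_pos (E := fun k => (B k - A k) - (V k - U k)) (n := n)
    (by simp [hA.eq_zero, hB.eq_zero]) (by simp [hA.eq_top, hB.eq_top]) ?_
  · exact fun k hk => sub_nonpos.1 (this k hk)
  intro t ht hpos
  have hflat : ¬ B (t + 2) - B (t + 1) < B (t + 1) - B t := fun hkink => by
    linarith [hB.eq_of_kink t ht hkink, hA.le (t + 1) (by omega)]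
  have hDt := hD t ht
  simp only [Pi.sub_apply] at hDt
  linarith [hA.concave t ht]

theorem concave_sub (hA : IsTightConcaveMajorant n U A) (hB : IsTightConcaveMajorant n V B)
    (hD : ConcaveOnIic n (V - U)) : ConcaveOnIic n (B - A) := by
  intro t ht
  have hDt := hD t ht
  simp only [Pi.sub_apply] at hDt ⊢
  by_cases hkink : A (t + 2) - A (t + 1) < A (t + 1) - A t
  · have hle := hA.sub_le_sub hB hD
    linarith [hA.eq_of_kink t ht hkink, hB.le (t + 1) (by omega), hle t (by omega),
      hle (t + 2) ht]
  · linarith [hA.concave t ht, hB.concave t ht]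

end IsTightConcaveMajorant

theorem inner_sub_sub_le_zero_of_forall_norm_sub_le {E : Type*} [NormedAddCommGroup E]
    [InnerProductSpace ℝ E] {K : Set E} (hK : Convex ℝ K) {w p : E} (hp : p ∈ K)
    (hmin : ∀ y ∈ K, ‖w - p‖ ≤ ‖w - y‖) : ∀ y ∈ K, ⟪w - p, y - p⟫ ≤ 0 := by
  have : Nonempty K := ⟨⟨p, hp⟩⟩
  have hbdd : BddBelow (Set.range fun y : K => ‖w - y‖) :=
    ⟨0, Set.forall_mem_range.2 fun _ => norm_nonneg _⟩
  exact (norm_eq_iInf_iff_real_inner_le_zero hK hp).1 <|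
    le_antisymm (le_ciInf fun y => hmin y y.2) (ciInf_le hbdd ⟨p, hp⟩)

theorem Fin.antitone_iff_forall_mk_succ_le {α : Type*} [Preorder α] {m : ℕ} {x : Fin m → α} :
    Antitone x ↔ ∀ t (ht : t + 1 < m), x ⟨t + 1, ht⟩ ≤ x ⟨t, by omega⟩ := by
  rcases m with _ | n
  · exact ⟨fun _ t ht => by omega, fun _ i => i.elim0⟩
  · rw [Fin.antitone_iff_succ_le]
    exact ⟨fun h t ht => h ⟨t, by omega⟩, fun h i => h i (by omega)⟩

namespace MonotoneWedge

variable {m : ℕ}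

theorem real_inner_eq_sum (x y : EuclideanSpace ℝ (Fin m)) : ⟪x, y⟫ = ∑ i, x i * y i := by
  simp [PiLp.inner_apply, mul_comm]

theorem sum_eq_zero_iff_forall_inner_eq_zero {y : EuclideanSpace ℝ (Fin m)} :
    ∑ i, y i = 0 ↔
      ∀ x : EuclideanSpace ℝ (Fin m), Antitone x.ofLp → Antitone (-x).ofLp → ⟪x, y⟫ = 0 := by
  refine ⟨fun hy x hx hnx => ?_, fun h => ?_⟩
  · have hconst : ∀ i j, x i = x j := fun i j => by
      rcases le_total i j with hij | hij
      · exact le_antisymm (by simpa using hnx hij) (hx hij)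
      · exact le_antisymm (hx hij) (by simpa using hnx hij)
    rcases isEmpty_or_nonempty (Fin m) with _ | ⟨⟨i₀⟩⟩
    · simp [real_inner_eq_sum]
    · simp [real_inner_eq_sum, hconst _ i₀, ← mul_sum, hy]
  · simpa [real_inner_eq_sum] using
      h (WithLp.toLp 2 fun _ => 1) (fun _ _ _ => le_rfl) (fun _ _ _ => le_rfl)

def antitoneSumZeroCone (m : ℕ) : Set (EuclideanSpace ℝ (Fin m)) :=
  {x | ∑ i, x i = 0 ∧ Antitone x.ofLp}

theorem convex_antitoneSumZeroCone : Convex ℝ (antitoneSumZeroCone m) := by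
  rintro x ⟨hxs, hxa⟩ y ⟨hys, hya⟩ a b ha hb -
  refine ⟨?_, fun i j hij => ?_⟩
  · simp [sum_add_distrib, ← mul_sum, hxs, hys]
  · simp only [WithLp.ofLp_add, WithLp.ofLp_smul, Pi.add_apply, Pi.smul_apply, smul_eq_mul]
    nlinarith [hxa hij, hya hij]

-- Subtracting its mean moves an antitone `y` into the cone without changing `⟪w - p, y⟫`,
-- because `w - p` sums to zero.
theorem inner_sub_sub_le_zero_of_antitone {w p : EuclideanSpace ℝ (Fin m)} (hw : ∑ i, w i = 0)
    (hp : p ∈ antitoneSumZeroCone m) (hmin : ∀ y ∈ antitoneSumZeroCone m, ‖w - p‖ ≤ ‖w - y‖)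
    {y : EuclideanSpace ℝ (Fin m)} (hy : Antitone y.ofLp) : ⟪w - p, y - p⟫ ≤ 0 := by
  set c := (∑ i, y i) / m
  have hz : y - WithLp.toLp 2 (fun _ => c) ∈ antitoneSumZeroCone m := by
    refine ⟨?_, fun i j hij => by simpa using hy hij⟩
    rcases eq_or_ne m 0 with rfl | hm
    · simp
    · simp [sum_sub_distrib, c]
      field_simp
      ring
  have := inner_sub_sub_le_zero_of_forall_norm_sub_le convex_antitoneSumZeroCone hp hmin _ hz
  have hconst : ⟪w - p, WithLp.toLp 2 (fun _ => c)⟫ = 0 := by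
    simp [real_inner_eq_sum, ← sum_mul, sum_sub_distrib, hw, hp.1]
  rwa [sub_right_comm, inner_sub_right, hconst, sub_zero] at this

def prefixSum (x : EuclideanSpace ℝ (Fin m)) (k : ℕ) : ℝ := ∑ i with i.val < k, x i

def prefixIndicator (m k : ℕ) : EuclideanSpace ℝ (Fin m) :=
  WithLp.toLp 2 fun i => if i.val < k then 1 else 0

theorem prefixSum_sub (x y : EuclideanSpace ℝ (Fin m)) :
    prefixSum (x - y) = prefixSum x - prefixSum y := by
  ext k
  simp [prefixSum, sum_sub_distrib]

theorem prefixSum_zero (x : EuclideanSpace ℝ (Fin m)) : prefixSum x 0 = 0 := by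
  simp [prefixSum]

theorem prefixSum_self (x : EuclideanSpace ℝ (Fin m)) : prefixSum x m = ∑ i, x i := by
  simp [prefixSum]

theorem prefixSum_succ_sub (x : EuclideanSpace ℝ (Fin m)) {t : ℕ} (ht : t < m) :
    prefixSum x (t + 1) - prefixSum x t = x ⟨t, ht⟩ := by
  rw [prefixSum, prefixSum, sum_filter, sum_filter, ← sum_sub_distrib,
    sum_eq_single ⟨t, ht⟩]
  · simp
  · intro i _ hi
    have : i.val ≠ t := fun h => hi (Fin.ext h)
    split_ifs <;> first | (exfalso; omega) | ring
  · simp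

theorem real_inner_prefixIndicator (x : EuclideanSpace ℝ (Fin m)) (k : ℕ) :
    ⟪x, prefixIndicator m k⟫ = prefixSum x k := by
  simp [real_inner_eq_sum, prefixIndicator, prefixSum, sum_filter]

theorem antitone_prefixIndicator (k : ℕ) : Antitone (prefixIndicator m k).ofLp := by
  intro i j hij
  have : i.val ≤ j.val := hij
  simp only [prefixIndicator]
  split_ifs <;> first | (exfalso; omega) | norm_num

theorem antitone_sub_smul_prefixIndicator {p : EuclideanSpace ℝ (Fin m)} (hp : Antitone p.ofLp)
    {t : ℕ} (ht : t + 1 < m) :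
    Antitone (p - (p ⟨t, by omega⟩ - p ⟨t + 1, ht⟩) • prefixIndicator m (t + 1)).ofLp := by
  intro i j hij
  have hij' : i.val ≤ j.val := hij
  simp only [prefixIndicator, WithLp.ofLp_sub, WithLp.ofLp_smul, Pi.sub_apply, Pi.smul_apply,
    smul_eq_mul]
  split_ifs with hj hi
  · linarith [hp hij]
  · omega
  · linarith [hp (show i ≤ ⟨t, by omega⟩ from Fin.le_def.2 (by simp; omega)),
      hp (show (⟨t + 1, ht⟩ : Fin m) ≤ j from Fin.le_def.2 (by simp; omega))]
  · linarith [hp hij]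

theorem concaveOnIic_prefixSum_iff {x : EuclideanSpace ℝ (Fin m)} :
    ConcaveOnIic m (prefixSum x) ↔ Antitone x.ofLp := by
  rw [Fin.antitone_iff_forall_mk_succ_le]
  refine forall_congr' fun t => ⟨fun h ht => ?_, fun h ht => ?_⟩ <;>
  · have := prefixSum_succ_sub x (by omega : t + 1 < m)
    have := prefixSum_succ_sub x (by omega : t < m)
    linarith [h (by omega)]

theorem isTightConcaveMajorant_prefixSum {w p : EuclideanSpace ℝ (Fin m)} (hw : ∑ i, w i = 0)
    (hp : p ∈ antitoneSumZeroCone m) (hmin : ∀ y ∈ antitoneSumZeroCone m, ‖w - p‖ ≤ ‖w - y‖) :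
    IsTightConcaveMajorant m (prefixSum w) (prefixSum p) := by
  have hvi := fun y => inner_sub_sub_le_zero_of_antitone hw hp hmin (y := y)
  have hle : ∀ k, prefixSum w k ≤ prefixSum p k := fun k => by
    have := hvi (p + prefixIndicator m k)
      (by rw [WithLp.ofLp_add]; exact hp.2.add (antitone_prefixIndicator k))
    rw [add_sub_cancel_left, real_inner_prefixIndicator, prefixSum_sub] at this
    simpa using this
  refine ⟨concaveOnIic_prefixSum_iff.2 hp.2, fun k _ => hle k,
    by rw [prefixSum_zero, prefixSum_zero], by rw [prefixSum_self, prefixSum_self, hw, hp.1],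
    fun t ht hkink => ?_⟩
  rw [prefixSum_succ_sub p (by omega : t + 1 < m), prefixSum_succ_sub p (by omega : t < m)]
    at hkink
  have := hvi _ (antitone_sub_smul_prefixIndicator hp.2 (by omega : t + 1 < m))
  rw [sub_sub_cancel_left, inner_neg_right, real_inner_smul_right, real_inner_prefixIndicator,
    prefixSum_sub] at this
  simp only [Pi.sub_apply] at this
  exact le_antisymm (by nlinarith) (hle _)

end MonotoneWedge

open MonotoneWedge in
/-- For the monotone wedge `W` in `ℝ^m`, `L = W ∩ (-W)`,
and `K = L^⊥ ∩ W`, the metric projection `P_K` onto `K` (within `L^⊥`) is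
`K`-isotone: if `u, v ∈ L^⊥` and `v - u ∈ K`, then `P_K v - P_K u ∈ K`. -/
theorem monotone_wedge_proj_K_isotone (m : ℕ)
    (W : Set (EuclideanSpace ℝ (Fin m)))
    (hW : W = {x | ∀ i j : Fin m, i ≤ j → x j ≤ x i})
    (L : Set (EuclideanSpace ℝ (Fin m))) (hL : L = W ∩ (-W))
    (Lperp : Set (EuclideanSpace ℝ (Fin m)))
    (hLperp : Lperp = {y | ∀ x ∈ L, ⟪x, y⟫ = 0})
    (K : Set (EuclideanSpace ℝ (Fin m))) (hK : K = Lperp ∩ W)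
    (PK : EuclideanSpace ℝ (Fin m) → EuclideanSpace ℝ (Fin m))
    (hPK : ∀ x ∈ Lperp, PK x ∈ K ∧ ∀ y ∈ K, ‖x - PK x‖ ≤ ‖x - y‖) :
    ∀ u ∈ Lperp, ∀ v ∈ Lperp, v - u ∈ K → PK v - PK u ∈ K := by
  have hLperp' : Lperp = {y | ∑ i, y i = 0} := by
    ext y
    rw [hLperp, hL, hW, Set.mem_ofPred_eq, Set.mem_ofPred_eq,
      sum_eq_zero_iff_forall_inner_eq_zero]
    exact ⟨fun h x hx hnx => h x ⟨hx, hnx⟩, fun h x hx => h x hx.1 hx.2⟩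
  have hK' : K = antitoneSumZeroCone m := by rw [hK, hLperp', hW]; rfl
  subst hLperp' hK'
  intro u hu v hv hd
  obtain ⟨hau, hminu⟩ := hPK u hu
  obtain ⟨hbv, hminv⟩ := hPK v hv
  have hA := isTightConcaveMajorant_prefixSum hu hau hminu
  have hB := isTightConcaveMajorant_prefixSum hv hbv hminv
  have hD := concaveOnIic_prefixSum_iff.2 hd.2
  rw [prefixSum_sub] at hD
  have hBA := hA.concave_sub hB hD
  rw [← prefixSum_sub, concaveOnIic_prefixSum_iff] at hBA
  exact ⟨by simp [sum_sub_distrib, hau.1, hbv.1], hBA⟩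
end

section
/- Let W = {x ∈ ℝ^m : x^1 ≥ x^2 ≥ ⋯ ≥ x^m} be the monotone wedge. Then the metric projection P_W onto W is W-isotone: for all u, v ∈ ℝ^m with v − u ∈ W (i.e., the coordinates of v − u are non-increasing), one has P_W v − P_W u ∈ W. -/
/-!
For `p` the nearest non-increasing vector to `x`, put `F k = ∑ i < k, (p i - x i)`. Testing the
variational inequality of the projection against `p ± t • 𝟙[i < k]` shows `F ≥ 0`, `F 0 = F m = 0`,
and `p k = p (k + 1)` whenever `F (k + 1) > 0`: `F` is the multiplier vector of the constraints,
and `p k - p (k + 1) = x k - x (k + 1) + (2 F (k + 1) - F k - F (k + 2))`.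
Let `F`, `G` belong to `p = P_W u`, `q = P_W v`. Where `G > F ≥ 0`, `q` is flat and `p` is
non-increasing, so the identity makes `G - F` discretely convex there; as `G - F` vanishes at both
ends, the maximum principle gives `G ≤ F`. Inserting this into the identity for `p` and `q` gives
`p k - p (k + 1) ≤ q k - q (k + 1)`, i.e. `q - p ∈ W`.
-/

open Finset InnerProductSpace

theorem real_inner_le_zero_of_forall_norm_sub_le {E : Type*} [NormedAddCommGroup E]
    [InnerProductSpace ℝ E] {K : Set E} (hK : Convex ℝ K) {x p : E} (hp : p ∈ K)
    (hmin : ∀ y ∈ K, ‖x - p‖ ≤ ‖x - y‖) {y : E} (hy : y ∈ K) : ⟪x - p, y - p⟫_ℝ ≤ 0 :=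
  have : Nonempty K := ⟨⟨p, hp⟩⟩
  have hbdd : BddBelow (Set.range fun z : K => ‖x - z‖) :=
    ⟨0, Set.forall_mem_range.2 fun _ => norm_nonneg _⟩
  (norm_eq_iInf_iff_real_inner_le_zero hK hp).1
    (le_antisymm (le_ciInf fun z => hmin z z.2) (ciInf_le hbdd ⟨p, hp⟩)) y hy

theorem nonpos_of_subharmonic_where_pos {w : ℕ → ℝ} {m : ℕ} (h0 : w 0 ≤ 0) (hm : w m ≤ 0)
    (hsub : ∀ k, k + 1 < m → 0 < w (k + 1) → 2 * w (k + 1) ≤ w k + w (k + 2)) :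
    ∀ k ≤ m, w k ≤ 0 := by
  classical
  have hex : ∃ j ≤ m, ∀ i ≤ m, w i ≤ w j := by
    obtain ⟨j, hj, hmax⟩ := (range (m + 1)).exists_max_image w nonempty_range_add_one
    exact ⟨j, by simpa [Nat.lt_succ_iff] using hj, fun i hi => hmax i (by simpa [Nat.lt_succ_iff])⟩
  -- the leftmost maximiser `j` has `w (j - 1) < w j`, which convexity at `j` forbids
  obtain ⟨hjm, hmax⟩ := Nat.find_spec hex
  suffices w (Nat.find hex) ≤ 0 from fun k hk => (hmax k hk).trans this
  by_contra! hpos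
  obtain ⟨k, hk⟩ : ∃ k, Nat.find hex = k + 1 :=
    Nat.exists_eq_succ_of_ne_zero fun h => by rw [h] at hpos; linarith
  rw [hk] at hjm hmax hpos
  have hkm : k + 1 < m := hjm.lt_of_ne fun h => by rw [h] at hpos; linarith
  have hlt : w k < w (k + 1) := by
    by_contra! h
    exact Nat.find_min hex (hk ▸ k.lt_succ_self) ⟨by omega, fun i hi => (hmax i hi).trans h⟩
  linarith [hsub k hkm hpos, hmax (k + 2) hkm]

def residualSum (x p : ℕ → ℝ) (k : ℕ) : ℝ := ∑ i ∈ range k, (p i - x i)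

theorem sub_succ_eq_residualSum (x p : ℕ → ℝ) (k : ℕ) :
    p k - p (k + 1) = x k - x (k + 1) +
      (2 * residualSum x p (k + 1) - residualSum x p k - residualSum x p (k + 2)) := by
  simp only [residualSum, sum_range_succ]
  ring

/-- The optimality conditions for `p` to be the nearest non-increasing sequence to `x` on the
indices `< m`: `residualSum x p (k + 1)` is the multiplier of the constraint `p (k + 1) ≤ p k`. -/
structure IsAntitoneFitKKT (m : ℕ) (x p : ℕ → ℝ) : Prop where
  succ_le : ∀ k, k + 1 < m → p (k + 1) ≤ p k
  residualSum_nonneg : ∀ k ≤ m, 0 ≤ residualSum x p k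
  residualSum_eq_zero : residualSum x p m = 0
  eq_of_residualSum_pos : ∀ k, k + 1 < m → 0 < residualSum x p (k + 1) → p (k + 1) = p k

theorem IsAntitoneFitKKT.sub_succ_le {m : ℕ} {u v p q : ℕ → ℝ} (hp : IsAntitoneFitKKT m u p)
    (hq : IsAntitoneFitKKT m v q) (huv : ∀ k, k + 1 < m → u k - u (k + 1) ≤ v k - v (k + 1))
    (k : ℕ) (hk : k + 1 < m) : p k - p (k + 1) ≤ q k - q (k + 1) := by
  set F := residualSum u p
  set G := residualSum v q
  have hGF : ∀ k ≤ m, G k ≤ F k := by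
    refine fun k hk => sub_nonpos.1 (nonpos_of_subharmonic_where_pos (w := G - F) ?_ ?_ ?_ k hk)
    · simp [F, G, residualSum]
    · simp only [Pi.sub_apply]
      linarith [hp.residualSum_eq_zero, hq.residualSum_eq_zero]
    · intro j hj hpos
      simp only [Pi.sub_apply] at hpos ⊢
      have hflat := hq.eq_of_residualSum_pos j hj (by linarith [hp.residualSum_nonneg _ hj.le])
      linarith [sub_succ_eq_residualSum u p j, sub_succ_eq_residualSum v q j, hp.succ_le j hj,
        huv j hj]
  rcases (hp.residualSum_nonneg (k + 1) hk.le).eq_or_lt with hF | hF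
  · have hG : G (k + 1) = 0 :=
      le_antisymm (hF ▸ hGF _ hk.le) (hq.residualSum_nonneg _ hk.le)
    linarith [sub_succ_eq_residualSum u p k, sub_succ_eq_residualSum v q k, hGF k (by omega),
      hGF (k + 2) hk, huv k hk]
  · rw [hp.eq_of_residualSum_pos k hk hF, sub_self]
    linarith [hq.succ_le k hk]

section EuclideanSpace

variable {m : ℕ}

def toSeq (x : EuclideanSpace ℝ (Fin m)) (i : ℕ) : ℝ := if h : i < m then x ⟨i, h⟩ else 0

theorem toSeq_of_lt (x : EuclideanSpace ℝ (Fin m)) {i : ℕ} (h : i < m) : toSeq x i = x ⟨i, h⟩ :=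
  dif_pos h

theorem toSeq_sub (x y : EuclideanSpace ℝ (Fin m)) : toSeq (x - y) = toSeq x - toSeq y := by
  ext i
  by_cases h : i < m <;> simp [toSeq, h]

theorem antitone_iff_toSeq {x : EuclideanSpace ℝ (Fin m)} :
    Antitone x ↔ ∀ k, k + 1 < m → toSeq x (k + 1) ≤ toSeq x k := by
  refine ⟨fun hx k hk => ?_, fun h i j hij => ?_⟩
  · rw [toSeq_of_lt x hk, toSeq_of_lt x (by omega)]
    exact hx (Fin.mk_le_mk.2 k.le_succ)
  · have key : ∀ d i, i + d < m → toSeq x (i + d) ≤ toSeq x i := by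
      intro d
      induction d with
      | zero => simp
      | succ d ih => exact fun i hi => (h (i + d) hi).trans (ih i (by omega))
    have := key (j - i) i (by omega)
    rwa [Nat.add_sub_cancel' (Fin.le_def.1 hij), toSeq_of_lt x j.2, toSeq_of_lt x i.2] at this

def prefixIndicator (m k : ℕ) : EuclideanSpace ℝ (Fin m) :=
  WithLp.toLp 2 fun i => if (i : ℕ) < k then 1 else 0

theorem inner_prefixIndicator (y : EuclideanSpace ℝ (Fin m)) {k : ℕ} (hk : k ≤ m) :
    ⟪y, prefixIndicator m k⟫_ℝ = ∑ i ∈ range k, toSeq y i := by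
  calc ⟪y, prefixIndicator m k⟫_ℝ
      = ∑ i : Fin m, (fun n => if n < k then toSeq y n else 0) i := by
        simp [PiLp.inner_apply, prefixIndicator, toSeq_of_lt]
    _ = ∑ n ∈ range m, if n < k then toSeq y n else 0 :=
        Fin.sum_univ_eq_sum_range (fun n => if n < k then toSeq y n else 0) m
    _ = ∑ n ∈ range k, toSeq y n := by
        rw [← sum_filter]
        congr 1
        ext n
        simp only [mem_filter, mem_range]
        omega

theorem antitone_add_smul_prefixIndicator {p : EuclideanSpace ℝ (Fin m)} (hp : Antitone p)
    {k : ℕ} {s : ℝ} (hs : ∀ i j : Fin m, (i : ℕ) < k → k ≤ j → p j ≤ p i + s) :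
    Antitone (p + s • prefixIndicator m k) := by
  intro i j hij
  have hij' : (i : ℕ) ≤ j := hij
  simp only [PiLp.add_apply, PiLp.smul_apply, prefixIndicator, smul_eq_mul, mul_ite, mul_one,
    mul_zero]
  split_ifs with hj hi hi
  · linarith [hp hij]
  · omega
  · linarith [hs i j hi (by omega)]
  · linarith [hp hij]

theorem convex_setOf_antitone : Convex ℝ {x : EuclideanSpace ℝ (Fin m) | Antitone x} := by
  intro x hx y hy a b ha hb _ i j hij
  simp only [PiLp.add_apply, PiLp.smul_apply, smul_eq_mul]
  nlinarith [hx hij, hy hij]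

theorem residualSum_toSeq (x p : EuclideanSpace ℝ (Fin m)) {k : ℕ} (hk : k ≤ m) :
    residualSum (toSeq x) (toSeq p) k = -⟪x - p, prefixIndicator m k⟫_ℝ := by
  rw [inner_prefixIndicator _ hk, toSeq_sub, residualSum, ← sum_neg_distrib]
  simp

theorem isAntitoneFitKKT_toSeq {x p : EuclideanSpace ℝ (Fin m)} (hp : Antitone p)
    (hmin : ∀ y : EuclideanSpace ℝ (Fin m), Antitone y → ‖x - p‖ ≤ ‖x - y‖) :
    IsAntitoneFitKKT m (toSeq x) (toSeq p) := by
  have hvariation (s : ℝ) (k : ℕ) (hk : k ≤ m) (hmem : Antitone (p + s • prefixIndicator m k)) :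
      0 ≤ s * residualSum (toSeq x) (toSeq p) k := by
    have := real_inner_le_zero_of_forall_norm_sub_le convex_setOf_antitone hp hmin hmem
    rw [add_sub_cancel_left, real_inner_smul_right] at this
    rw [residualSum_toSeq x p hk]
    linarith
  have hsucc := antitone_iff_toSeq.1 hp
  have hnonneg (k : ℕ) (hk : k ≤ m) : 0 ≤ residualSum (toSeq x) (toSeq p) k := by
    simpa using hvariation 1 k hk (antitone_add_smul_prefixIndicator hp fun i j hi hj =>
      by linarith [hp (Fin.le_def.2 (by omega : (i : ℕ) ≤ j))])
  refine ⟨hsucc, hnonneg, ?_, fun k hk hpos => ?_⟩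
  · refine le_antisymm ?_ (hnonneg m le_rfl)
    have := hvariation (-1) m le_rfl (antitone_add_smul_prefixIndicator hp fun i j _ hj => by omega)
    linarith
  · by_contra hne
    have hlt : toSeq p (k + 1) < toSeq p k := (hsucc k hk).lt_of_ne hne
    have := hvariation (toSeq p (k + 1) - toSeq p k) (k + 1) hk.le
      (antitone_add_smul_prefixIndicator hp fun i j hi hj => ?_)
    · linarith [mul_neg_of_neg_of_pos (sub_neg.2 hlt) hpos]
    · rw [toSeq_of_lt p hk, toSeq_of_lt p (by omega)]
      linarith [hp (show (⟨k + 1, hk⟩ : Fin m) ≤ j from hj),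
        hp (show i ≤ (⟨k, by omega⟩ : Fin m) from Nat.lt_succ_iff.1 hi)]

end EuclideanSpace

/-- The metric projection onto the monotone wedge
`W = {x : x^1 ≥ x^2 ≥ ⋯ ≥ x^m}` in `ℝ^m` is `W`-isotone: if `v - u ∈ W`,
then `P_W v - P_W u ∈ W`. -/
theorem monotone_wedge_proj_isotone (m : ℕ)
    (W : Set (EuclideanSpace ℝ (Fin m)))
    (hW : W = {x | ∀ i j : Fin m, i ≤ j → x j ≤ x i})
    (PW : EuclideanSpace ℝ (Fin m) → EuclideanSpace ℝ (Fin m))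
    (hPW : ∀ x, PW x ∈ W ∧ ∀ y ∈ W, ‖x - PW x‖ ≤ ‖x - y‖) :
    ∀ u v : EuclideanSpace ℝ (Fin m), v - u ∈ W → PW v - PW u ∈ W := by
  subst hW
  intro u v huv
  have hu := isAntitoneFitKKT_toSeq (hPW u).1 (hPW u).2
  have hv := isAntitoneFitKKT_toSeq (hPW v).1 (hPW v).2
  have huv' := antitone_iff_toSeq.1 huv
  refine antitone_iff_toSeq.2 fun k hk => ?_
  simp only [toSeq_sub, Pi.sub_apply] at huv' ⊢
  linarith [hu.sub_succ_le hv (fun j hj => by linarith [huv' j hj]) k hk]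
end
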